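/- With d, δ, Δ as above (Δ = [d, δ] acting as multiplication by m on polynomials of generator-degree m), for any scalar λ we have the operator identity (d - λΔ) ∘ exp(λδ) = exp(λδ) ∘ d on each finite-dimensional graded piece of A = ℚ[x₁, x₂, ...] (where exp(λδ) is a finite sum on each element since δ raises the weighted degree). In particular, if f ∈ ker d is homogeneous of generator-degree m > 0 and λ = 1/m, then (d - 1)(exp(λδ)(f)) = 0, i.e., g := exp((1/m)δ)(f) satisfies d(g) = g. -/

import Mathlib

open MvPolynomial

/-!
The commutator `Δ = [d, δ]` is the derivation `xₖ ↦ xₖ`, i.e. the Euler operator, which is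
multiplication by `m` on polynomials homogeneous of degree `m`. Since `δ` maps generators to linear
forms, `Δ` commutes with `δ`, and in any ring `[a, b] b = b [a, b]` implies
`[a, b^(n+1)] = (n+1) [a, b] bⁿ`. On `f ∈ ker d` of degree `m` this reads
`d (δ^(k+1) f) = (k+1) m δᵏ f`, which is `d g_(k+1) = g_k` for `g_k = δᵏ f / (mᵏ k!)`.
-/

/-- The derivation `d` with `d xₖ = x_{k-1}` (`x₀ = 0`); `X i` stands for `x_{i+1}`. -/
noncomputable def dDown : Derivation ℚ (MvPolynomial ℕ ℚ) (MvPolynomial ℕ ℚ) :=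
  MvPolynomial.mkDerivation ℚ (fun i => if i = 0 then 0 else X (i - 1))

/-- The derivation `δ` with `δ xₖ = k·x_{k+1}`. -/
noncomputable def dUp : Derivation ℚ (MvPolynomial ℕ ℚ) (MvPolynomial ℕ ℚ) :=
  MvPolynomial.mkDerivation ℚ (fun i => ((i : ℚ) + 1) • X (i + 1))

/-- `d` as an endomorphism. -/
noncomputable def D : Module.End ℚ (MvPolynomial ℕ ℚ) := dDown.toLinearMap

/-- `δ` as an endomorphism. -/
noncomputable def Δ' : Module.End ℚ (MvPolynomial ℕ ℚ) := dUp.toLinearMap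

/-- The Euler commutator `Δ = dδ - δd`. -/
noncomputable def Euler : Module.End ℚ (MvPolynomial ℕ ℚ) := D * Δ' - Δ' * D

theorem lie_pow_succ_of_commute {R : Type*} [Ring R] {a b : R} (h : Commute ⁅a, b⁆ b) (n : ℕ) :
    ⁅a, b ^ (n + 1)⁆ = (n + 1) • (⁅a, b⁆ * b ^ n) := by
  induction n with
  | zero => simp
  | succ n ih =>
    calc ⁅a, b ^ (n + 1 + 1)⁆ = ⁅a, b ^ (n + 1)⁆ * b + b ^ (n + 1) * ⁅a, b⁆ := by
          simp only [Ring.lie_def, pow_succ _ (n + 1), mul_sub, sub_mul, mul_assoc]; abel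
      _ = (n + 1 + 1) • (⁅a, b⁆ * b ^ (n + 1)) := by
          rw [ih, smul_mul_assoc, mul_assoc, ← pow_succ, ← (h.pow_right (n + 1)).eq, ← succ_nsmul]

namespace MvPolynomial
variable {σ R : Type*} [CommSemiring R]

theorem mkDerivation_X_monomial (s : σ →₀ ℕ) (r : R) :
    mkDerivation R (X : σ → MvPolynomial σ R) (monomial s r) = s.degree • monomial s r := by
  have hterm : ∀ i ∈ s.support,
      monomial (s - Finsupp.single i 1) (s i : R) • (X i : MvPolynomial σ R)
        = s i • monomial s 1 := by
    intro i hi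
    have hle : Finsupp.single i 1 ≤ s := Finsupp.single_le_iff.mpr
      (Nat.one_le_iff_ne_zero.mpr (Finsupp.mem_support_iff.mp hi))
    rw [smul_eq_mul, X, monomial_mul, tsub_add_cancel_of_le hle, mul_one, ← nsmul_one,
      ← smul_monomial]
  rw [mkDerivation_monomial, Finsupp.sum, Finset.sum_congr rfl hterm, ← Finset.sum_smul,
    ← Finsupp.degree_apply, smul_comm, smul_monomial, smul_eq_mul, mul_one]

theorem IsHomogeneous.mkDerivation_X_apply {φ : MvPolynomial σ R} {n : ℕ}
    (h : φ.IsHomogeneous n) :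
    mkDerivation R (X : σ → MvPolynomial σ R) φ = n • φ := by
  have hterm : ∀ s ∈ φ.support,
      mkDerivation R (X : σ → MvPolynomial σ R) (monomial s (coeff s φ))
        = n • monomial s (coeff s φ) := fun s hs => by
    rw [mkDerivation_X_monomial, Finsupp.degree_apply, ← h.degree_eq_sum_deg_support hs]
  conv_lhs => rw [φ.as_sum]
  rw [map_sum, Finset.sum_congr rfl hterm, ← Finset.smul_sum, ← φ.as_sum]

end MvPolynomial

theorem MvPolynomial.lie_mkDerivation_X_eq_zero {σ R : Type*} [CommRing R]
    (D : Derivation R (MvPolynomial σ R) (MvPolynomial σ R))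
    (hD : ∀ i, (D (X i)).IsHomogeneous 1) : ⁅mkDerivation R (X : σ → MvPolynomial σ R), D⁆ = 0 :=
  derivation_ext fun i => by
    rw [Derivation.commutator_apply, mkDerivation_X, (hD i).mkDerivation_X_apply, one_smul,
      sub_self, Derivation.zero_apply]

@[simp]
lemma dDown_X (i : ℕ) : dDown (X i) = if i = 0 then 0 else X (i - 1) :=
  mkDerivation_X _ _ _

@[simp]
lemma dUp_X (i : ℕ) : dUp (X i) = ((i : ℚ) + 1) • X (i + 1) :=
  mkDerivation_X _ _ _

lemma lie_dDown_dUp : ⁅dDown, dUp⁆ = mkDerivation ℚ X := by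
  refine derivation_ext fun i => ?_
  rcases i with _ | i
  · simp [Derivation.commutator_apply]
  · simp [Derivation.commutator_apply, ← sub_smul]

lemma Euler_eq : Euler = (mkDerivation ℚ X : Derivation ℚ (MvPolynomial ℕ ℚ) _).toLinearMap := by
  rw [← lie_dDown_dUp, Derivation.commutator_coe_linear_map, Ring.lie_def]
  rfl

lemma commute_Euler_Δ' : Commute Euler Δ' := by
  have hdUp : ∀ i, (dUp (X i)).IsHomogeneous 1 := fun i => by
    rw [dUp_X, smul_eq_C_mul]; exact (isHomogeneous_X ℚ _).C_mul _
  have h := congrArg Derivation.toLinearMap (lie_mkDerivation_X_eq_zero dUp hdUp)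
  rw [Derivation.commutator_coe_linear_map, Ring.lie_def, ← Euler_eq] at h
  exact sub_eq_zero.mp h

lemma Euler_apply_of_isHomogeneous {f : MvPolynomial ℕ ℚ} {m : ℕ} (hf : f.IsHomogeneous m) :
    Euler f = (m : ℚ) • f := by
  rw [Euler_eq, Nat.cast_smul_eq_nsmul]
  exact hf.mkDerivation_X_apply

lemma D_mul_Δ'_pow_succ_sub (n : ℕ) :
    D * Δ' ^ (n + 1) - Δ' ^ (n + 1) * D = ((n : ℚ) + 1) • (Euler * Δ' ^ n) := by
  have h := lie_pow_succ_of_commute (a := D) (b := Δ')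
    (by rw [Ring.lie_def]; exact commute_Euler_Δ') n
  rw [Ring.lie_def, Ring.lie_def, ← Nat.cast_smul_eq_nsmul ℚ] at h
  exact_mod_cast h

lemma dDown_Δ'_pow_succ {f : MvPolynomial ℕ ℚ} {m : ℕ} (hf : f.IsHomogeneous m)
    (hd : dDown f = 0) (k : ℕ) :
    dDown ((Δ' ^ (k + 1)) f) = (((k : ℚ) + 1) * m) • (Δ' ^ k) f := by
  calc dDown ((Δ' ^ (k + 1)) f) = (D * Δ' ^ (k + 1) - Δ' ^ (k + 1) * D) f := by
        rw [LinearMap.sub_apply, Module.End.mul_apply, Module.End.mul_apply, show D f = 0 from hd,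
          map_zero, sub_zero]
        rfl
    _ = ((k : ℚ) + 1) • (Δ' ^ k) (Euler f) := by
        rw [D_mul_Δ'_pow_succ_sub, LinearMap.smul_apply, (commute_Euler_Δ'.pow_right k).eq]; rfl
    _ = (((k : ℚ) + 1) * m) • (Δ' ^ k) f := by
        rw [Euler_apply_of_isHomogeneous hf, map_smul, smul_smul]

/-- The operator identity `[d, δⁿ] = n Δ δ^{n-1}` for `n ≥ 1`; consequently, if
`f ∈ ker d` is homogeneous of generator-degree `m > 0` and `gₖ = (mᵏ k!)⁻¹ δᵏ f`
are the terms of `exp((1/m)δ)(f)`, then `d gₖ = g_{k-1}` for `k ≥ 1`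
(i.e. `(d - 1)(exp((1/m)δ)(f)) = 0` degree-by-degree). -/
theorem stmt_17 :
    (∀ n : ℕ, 1 ≤ n → D * Δ' ^ n - Δ' ^ n * D = (n : ℚ) • (Euler * Δ' ^ (n - 1))) ∧
    (∀ (m : ℕ) (f : MvPolynomial ℕ ℚ), 0 < m → f.IsHomogeneous m → dDown f = 0 →
      ∀ k : ℕ, 1 ≤ k →
        dDown ((((m : ℚ) ^ k * k.factorial)⁻¹) • (Δ' ^ k) f)
          = (((m : ℚ) ^ (k - 1) * (k - 1).factorial)⁻¹) • (Δ' ^ (k - 1)) f) := by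
  refine ⟨fun n hn => ?_, fun m f hm hf hd k hk => ?_⟩
  · obtain ⟨n, rfl⟩ := Nat.exists_eq_add_of_le' hn
    simpa using D_mul_Δ'_pow_succ_sub n
  · obtain ⟨k, rfl⟩ := Nat.exists_eq_add_of_le' hk
    rw [Nat.add_sub_cancel, Derivation.map_smul, dDown_Δ'_pow_succ hf hd, smul_smul]
    congr 1
    have hm0 : (m : ℚ) ≠ 0 := by positivity
    push_cast [Nat.factorial_succ, pow_succ]
    field_simp
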